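/- Projection of reduction through unwrapping: let t be a closed well-formed term of λ_int. If t →_{iβv} u then ⌊t⌋ →_βv ⌊u⌋, and if t →_{iπ} u then ⌊t⌋ →_π ⌊u⌋ in the source calculus λ_sou. -/

import Mathlib

set_option linter.unusedVariables false

namespace CC

/-- Terms of the source calculus λ_sou (de Bruijn indices, multi-binders). -/
inductive STm : Type
| var : Nat → STm
| lam : Nat → STm → STm
| app : STm → STm → STm
| proj : Nat → STm → STm
| tup : List STm → STm

instance : Inhabited STm := ⟨.var 0⟩

namespace STm

/-- Size of a source term. -/
def size : STm → Nat
| var _ => 1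
| lam n t => t.size + n + 1
| app t u => t.size + u.size + 1
| proj _ t => t.size + 1
| tup ts => ts.length + (ts.attach.map (fun ⟨a, ha⟩ => a.size)).sum
decreasing_by all_goals first
  | (have := List.sizeOf_lt_of_mem ha; omega)
  | decreasing_tactic

/-- Renaming of free de Bruijn indices. -/
def rename (ρ : Nat → Nat) : STm → STm
| var i => var (ρ i)
| lam n t => lam n (t.rename (fun i => if i < n then i else ρ (i - n) + n))
| app t u => app (t.rename ρ) (u.rename ρ)
| proj i t => proj i (t.rename ρ)
| tup ts => tup (ts.attach.map (fun ⟨a, ha⟩ => a.rename ρ))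
decreasing_by all_goals first
  | (have := List.sizeOf_lt_of_mem ha; omega)
  | decreasing_tactic

/-- Parallel substitution. -/
def subst (σ : Nat → STm) : STm → STm
| var i => σ i
| lam n t => lam n (t.subst (fun i => if i < n then var i else (σ (i - n)).rename (· + n)))
| app t u => app (t.subst σ) (u.subst σ)
| proj i t => proj i (t.subst σ)
| tup ts => tup (ts.attach.map (fun ⟨a, ha⟩ => a.subst σ))
decreasing_by all_goals first
  | (have := List.sizeOf_lt_of_mem ha; omega)
  | decreasing_tactic

/-- Simultaneous substitution of a list of terms for indices `0..vs.length-1`. -/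
def substList (vs : List STm) (t : STm) : STm :=
  t.subst (fun i => if i < vs.length then vs.getD i default else var (i - vs.length))

end STm

/-- Values of λ_sou: (multi-variable) abstractions and tuples of values. -/
inductive SVal : STm → Prop
| lam {n t} : SVal (.lam n t)
| tup {vs} : (∀ v ∈ vs, SVal v) → SVal (.tup vs)

/-- All free de Bruijn indices of `t` are `< k`. `FB 0 t` means `t` is closed. -/
inductive SFB : Nat → STm → Prop
| var {k i} : i < k → SFB k (.var i)
| lam {k n t} : SFB (k + n) t → SFB k (.lam n t)
| app {k t u} : SFB k t → SFB k u → SFB k (.app t u)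
| proj {k i t} : SFB k t → SFB k (.proj i t)
| tup {k ts} : (∀ t ∈ ts, SFB k t) → SFB k (.tup ts)

/-- Labels for the two rewrite rules. -/
inductive Lab | beta | pi
deriving DecidableEq

/-- Labelled weak right-to-left call-by-value reduction of λ_sou,
root rules closed under evaluation contexts. -/
inductive SStepL : Lab → STm → STm → Prop
| beta {n t vs} : (∀ v ∈ vs, SVal v) → vs.length = n →
    SStepL .beta (.app (.lam n t) (.tup vs)) (STm.substList vs t)
| proj {i vs} : (∀ v ∈ vs, SVal v) → i < vs.length →
    SStepL .pi (.proj i (.tup vs)) (vs.getD i default)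
| appR {l t u u'} : SStepL l u u' → SStepL l (.app t u) (.app t u')
| appL {l v t t'} : SVal v → SStepL l t t' → SStepL l (.app t v) (.app t' v)
| projC {l i t t'} : SStepL l t t' → SStepL l (.proj i t) (.proj i t')
| tupC {l ts t t' vs} : (∀ v ∈ vs, SVal v) → SStepL l t t' →
    SStepL l (.tup (ts ++ t :: vs)) (.tup (ts ++ t' :: vs))

/-- The reduction →_sou. -/
def SStep (t u : STm) : Prop := ∃ l, SStepL l t u

/-- Clashes of λ_sou: root clashes closed under evaluation contexts. -/
inductive SClash : STm → Prop
| rproj {i v} : SVal v → (∀ vs, v = .tup vs → vs.length ≤ i) → SClash (.proj i v)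
| rapp {n t v} : SVal v → (∀ vs, v = .tup vs → vs.length ≠ n) → SClash (.app (.lam n t) v)
| rtup {rs s} : SClash (.app (.tup rs) s)
| cAppR {t u} : SClash u → SClash (.app t u)
| cAppL {t v} : SVal v → SClash t → SClash (.app t v)
| cProj {i t} : SClash t → SClash (.proj i t)
| cTup {ts t vs} : (∀ v ∈ vs, SVal v) → SClash t → SClash (.tup (ts ++ t :: vs))

/-- Clash-freeness (coinductively: no reduct is a clash). -/
def SClashFree (t : STm) : Prop := ∀ u, Relation.ReflTransGen SStep t u → ¬ SClash u

/-- `k`-fold iteration of a reduction. -/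
def iterRel {α : Type _} (R : α → α → Prop) : Nat → α → α → Prop
| 0, t, u => t = u
| (k+1), t, u => ∃ s, R t s ∧ iterRel R k s u

end CC

namespace CC

/-- Terms of the intermediate calculus λ_int: abstractions are replaced by
closures `clo n m body bag` binding `n` wrapped variables ȳ (indices `m..m+n-1`
of the body) and `m` source variables x̄ (indices `0..m-1` of the body),
with a bag of `n` terms. -/
inductive ITm : Type
| var : Nat → ITm
| app : ITm → ITm → ITm
| proj : Nat → ITm → ITm
| tup : List ITm → ITm
| clo : Nat → Nat → ITm → List ITm → ITm

instance : Inhabited ITm := ⟨.var 0⟩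

namespace ITm

/-- Renaming of free variables of a λ_int term: closure bodies are untouched
(there are no free variables in the body other than the closure's own binders). -/
def irename (ρ : Nat → Nat) : ITm → ITm
| var i => var (ρ i)
| app t u => app (t.irename ρ) (u.irename ρ)
| proj i t => proj i (t.irename ρ)
| tup ts => tup (ts.attach.map (fun ⟨a, ha⟩ => a.irename ρ))
| clo n m body bag => clo n m body (bag.attach.map (fun ⟨a, ha⟩ => a.irename ρ))
decreasing_by all_goals first
  | (have := List.sizeOf_lt_of_mem ha; omega)
  | decreasing_tactic

/-- Simultaneous substitution of the terms `vs` for the free variables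
`0..vs.length-1` of a λ_int term (shifting the remaining ones down);
it goes into bags but leaves closure bodies untouched. -/
def isubst (vs : List ITm) : ITm → ITm
| var i => if i < vs.length then vs.getD i default else var (i - vs.length)
| app t u => app (t.isubst vs) (u.isubst vs)
| proj i t => proj i (t.isubst vs)
| tup ts => tup (ts.attach.map (fun ⟨a, ha⟩ => a.isubst vs))
| clo n m body bag => clo n m body (bag.attach.map (fun ⟨a, ha⟩ => a.isubst vs))
decreasing_by all_goals first
  | (have := List.sizeOf_lt_of_mem ha; omega)
  | decreasing_tactic

/-- Size of a λ_int term (counting bags and binder sequences). -/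
def isize : ITm → Nat
| var _ => 1
| app t u => t.isize + u.isize + 1
| proj _ t => t.isize + 1
| tup ts => ts.length + (ts.attach.map (fun ⟨a, ha⟩ => a.isize)).sum
| clo n m body bag =>
    body.isize + n + m + 1 + bag.length + (bag.attach.map (fun ⟨a, ha⟩ => a.isize)).sum
decreasing_by all_goals first
  | (have := List.sizeOf_lt_of_mem ha; omega)
  | decreasing_tactic

end ITm

/-- Values of λ_int: closures (with a variable bag or with an evaluated bag)
and tuples of values. -/
inductive IVal : ITm → Prop
| cloV {n m t bag} : (∀ b ∈ bag, ∃ i, b = ITm.var i) → IVal (.clo n m t bag)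
| cloE {n m t bag} : (∀ b ∈ bag, IVal b) → IVal (.clo n m t bag)
| tup {vs} : (∀ v ∈ vs, IVal v) → IVal (.tup vs)

/-- All free variables of a λ_int term are `< k` (`IFB 0 t`: `t` is closed). -/
inductive IFB : Nat → ITm → Prop
| var {k i} : i < k → IFB k (.var i)
| app {k t u} : IFB k t → IFB k u → IFB k (.app t u)
| proj {k i t} : IFB k t → IFB k (.proj i t)
| tup {k ts} : (∀ t ∈ ts, IFB k t) → IFB k (.tup ts)
| clo {k n m body bag} : (∀ b ∈ bag, IFB k b) → IFB (n + m + k) body →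
    IFB k (.clo n m body bag)

/-- Well-formed λ_int terms: every closure `clo n m body bag` satisfies
`|bag| = n`, its body is closed by the binders (fv(body) ⊆ ȳ ∪ x̄), and the bag
is either a bag of variables or a bag of values. -/
inductive IWF : ITm → Prop
| var {i} : IWF (.var i)
| app {t u} : IWF t → IWF u → IWF (.app t u)
| proj {i t} : IWF t → IWF (.proj i t)
| tup {ts} : (∀ t ∈ ts, IWF t) → IWF (.tup ts)
| cloV {n m body bag} : bag.length = n → IFB (n + m) body →
    (∀ b ∈ bag, ∃ i, b = ITm.var i) → IWF body → IWF (.clo n m body bag)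
| cloE {n m body bag} : bag.length = n → IFB (n + m) body →
    (∀ b ∈ bag, IVal b) → (∀ b ∈ bag, IWF b) → IWF body → IWF (.clo n m body bag)

/-- Prime λ_int terms: all closures are variable closures. -/
inductive IPrime : ITm → Prop
| var {i} : IPrime (.var i)
| app {t u} : IPrime t → IPrime u → IPrime (.app t u)
| proj {i t} : IPrime t → IPrime (.proj i t)
| tup {ts} : (∀ t ∈ ts, IPrime t) → IPrime (.tup ts)
| clo {n m body bag} : (∀ b ∈ bag, ∃ i, b = ITm.var i) → IPrime body →
    IPrime (.clo n m body bag)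

/-- Labelled reduction of λ_int: the root rules `iβv` (the closure's bag is
substituted for ȳ and the argument tuple for x̄, simultaneously) and `iπ`,
closed under evaluation contexts (which do not enter closures). -/
inductive IStepL : Lab → ITm → ITm → Prop
| beta {n m body bag vs} : (∀ b ∈ bag, IVal b) → (∀ v ∈ vs, IVal v) →
    bag.length = n → vs.length = m →
    IStepL .beta (.app (.clo n m body bag) (.tup vs)) (ITm.isubst (vs ++ bag) body)
| proj {i vs} : (∀ v ∈ vs, IVal v) → i < vs.length →
    IStepL .pi (.proj i (.tup vs)) (vs.getD i default)
| appR {l t u u'} : IStepL l u u' → IStepL l (.app t u) (.app t u')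
| appL {l v t t'} : IVal v → IStepL l t t' → IStepL l (.app t v) (.app t' v)
| projC {l i t t'} : IStepL l t t' → IStepL l (.proj i t) (.proj i t')
| tupC {l ts t t' vs} : (∀ v ∈ vs, IVal v) → IStepL l t t' →
    IStepL l (.tup (ts ++ t :: vs)) (.tup (ts ++ t' :: vs))

/-- The reduction →_int. -/
def IStep (t u : ITm) : Prop := ∃ l, IStepL l t u

/-- Clashes of λ_int: root clashes closed under evaluation contexts. -/
inductive IClash : ITm → Prop
| rproj {i v} : IVal v → (∀ vs, v = .tup vs → vs.length ≤ i) → IClash (.proj i v)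
| rapp {n m body bag v} : IVal v → (∀ vs, v = .tup vs → vs.length ≠ m) →
    IClash (.app (.clo n m body bag) v)
| rtup {rs s} : IClash (.app (.tup rs) s)
| cAppR {t u} : IClash u → IClash (.app t u)
| cAppL {t v} : IVal v → IClash t → IClash (.app t v)
| cProj {i t} : IClash t → IClash (.proj i t)
| cTup {ts t vs} : (∀ v ∈ vs, IVal v) → IClash t → IClash (.tup (ts ++ t :: vs))

/-- Clash-freeness for λ_int. -/
def IClashFree (t : ITm) : Prop := ∀ u, Relation.ReflTransGen IStep t u → ¬ IClash u

/-- The wrapping translation ⌈·⌉ : λ_sou → λ_int: every abstraction `λx̄.t` with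
free variables ȳ becomes the variable closure `[λȳ.λx̄.⌈t⌉, ⟨ȳ⟩]`; homomorphic
on the other constructors. -/
def STm.fvs : STm → Finset Nat
| .var i => {i}
| .lam n t => (t.fvs.filter (· ≥ n)).image (· - n)
| .app t u => t.fvs ∪ u.fvs
| .proj _ t => t.fvs
| .tup ts => ts.attach.foldr (fun ⟨a, ha⟩ acc => a.fvs ∪ acc) ∅
decreasing_by all_goals first
  | (have := List.sizeOf_lt_of_mem ha; omega)
  | decreasing_tactic

def STm.wrap : STm → ITm
| .var i => .var i
| .app t u => .app t.wrap u.wrap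
| .proj i t => .proj i t.wrap
| .tup ts => .tup (ts.attach.map (fun ⟨a, ha⟩ => a.wrap))
| .lam n t =>
    let ys : List Nat := (((t.fvs.filter (· ≥ n)).image (· - n)).sort (· ≤ ·))
    .clo ys.length n
      (t.wrap.irename (fun j => if j < n then j else n + (ys.idxOf (j - n))))
      (ys.map (fun j => ITm.var j))
decreasing_by all_goals first
  | (have := List.sizeOf_lt_of_mem ha; omega)
  | decreasing_tactic

/-- The unwrapping translation ⌊·⌋ : λ_int → λ_sou: substitutes the (unwrapped)
bag of each closure for its wrapped variables ȳ; on a variable closure with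
bag ⟨ȳ⟩ this gives `λx̄.⌊body⌋` with the ȳ free. -/
def ITm.unwrap : ITm → STm
| .var i => .var i
| .app t u => .app t.unwrap u.unwrap
| .proj i t => .proj i t.unwrap
| .tup ts => .tup (ts.attach.map (fun ⟨a, ha⟩ => a.unwrap))
| .clo n m body bag =>
    let ub : List STm := bag.attach.map (fun ⟨a, ha⟩ => a.unwrap)
    .lam m (body.unwrap.subst (fun i =>
      if i < m then .var i
      else if i < m + n then (ub.getD (i - m) default).rename (· + m)
      else .var (i - n)))
decreasing_by all_goals first
  | (have := List.sizeOf_lt_of_mem ha; omega)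
  | decreasing_tactic

end CC

namespace CC

/-! ### Auxiliary infrastructure -/

theorem getD_mem' {α} [Inhabited α] {l : List α} {i : Nat} (h : i < l.length) :
    l.getD i default ∈ l := by
  rw [List.getD_eq_getElem l default h]; exact List.getElem_mem h

theorem getD_append_left' {α} [Inhabited α] (l l' : List α) (i : Nat) (h : i < l.length) :
    (l ++ l').getD i default = l.getD i default := by
  simp [List.getD, List.getElem?_append_left h]

theorem getD_append_right' {α} [Inhabited α] (l l' : List α) (i : Nat) (h : l.length ≤ i) :
    (l ++ l').getD i default = l'.getD (i - l.length) default := by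
  simp [List.getD, List.getElem?_append_right h]

/-- The substitution used by `substList`. -/
def sigS (l : List STm) : Nat → STm :=
  fun i => if i < l.length then l.getD i default else .var (i - l.length)

theorem substList_eq (vs : List STm) (t : STm) : STm.substList vs t = t.subst (sigS vs) := rfl

def liftR (n : Nat) (ρ : Nat → Nat) : Nat → Nat :=
  fun i => if i < n then i else ρ (i - n) + n

def liftS (n : Nat) (σ : Nat → STm) : Nat → STm :=
  fun i => if i < n then .var i else (σ (i - n)).rename (· + n)

namespace STm

theorem inductionOn {P : STm → Prop}
    (hvar : ∀ i, P (.var i))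
    (hlam : ∀ n t, P t → P (.lam n t))
    (happ : ∀ t u, P t → P u → P (.app t u))
    (hproj : ∀ i t, P t → P (.proj i t))
    (htup : ∀ ts, (∀ t ∈ ts, P t) → P (.tup ts)) : ∀ t, P t
  | .var i => hvar i
  | .lam n t => hlam n t (inductionOn hvar hlam happ hproj htup t)
  | .app t u => happ t u (inductionOn hvar hlam happ hproj htup t)
      (inductionOn hvar hlam happ hproj htup u)
  | .proj i t => hproj i t (inductionOn hvar hlam happ hproj htup t)
  | .tup ts => htup ts (fun t ht => inductionOn hvar hlam happ hproj htup t)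
decreasing_by all_goals first
  | (have := List.sizeOf_lt_of_mem ht; omega)
  | decreasing_tactic

@[simp] theorem rename_var (ρ : Nat → Nat) (i : Nat) : (var i).rename ρ = var (ρ i) := by
  rw [rename]

@[simp] theorem rename_lam (ρ : Nat → Nat) (n : Nat) (t : STm) :
    (lam n t).rename ρ = lam n (t.rename (liftR n ρ)) := by
  rw [rename]; rfl

@[simp] theorem rename_app (ρ : Nat → Nat) (t u : STm) :
    (app t u).rename ρ = app (t.rename ρ) (u.rename ρ) := by rw [rename]

@[simp] theorem rename_proj (ρ : Nat → Nat) (i : Nat) (t : STm) :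
    (proj i t).rename ρ = proj i (t.rename ρ) := by rw [rename]

@[simp] theorem rename_tup (ρ : Nat → Nat) (ts : List STm) :
    (tup ts).rename ρ = tup (ts.map (rename ρ)) := by rw [rename]; simp

@[simp] theorem subst_var (σ : Nat → STm) (i : Nat) : (var i).subst σ = σ i := by
  rw [subst]

@[simp] theorem subst_lam (σ : Nat → STm) (n : Nat) (t : STm) :
    (lam n t).subst σ = lam n (t.subst (liftS n σ)) := by
  rw [subst]; rfl

@[simp] theorem subst_app (σ : Nat → STm) (t u : STm) :
    (app t u).subst σ = app (t.subst σ) (u.subst σ) := by rw [subst]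

@[simp] theorem subst_proj (σ : Nat → STm) (i : Nat) (t : STm) :
    (proj i t).subst σ = proj i (t.subst σ) := by rw [subst]

@[simp] theorem subst_tup (σ : Nat → STm) (ts : List STm) :
    (tup ts).subst σ = tup (ts.map (subst σ)) := by rw [subst]; simp

theorem rename_rename (t : STm) : ∀ ρ ρ' : Nat → Nat,
    (t.rename ρ).rename ρ' = t.rename (fun i => ρ' (ρ i)) := by
  induction t using inductionOn with
  | hvar i => intro ρ ρ'; simp
  | hlam n t ih =>
    intro ρ ρ'
    simp only [rename_lam, ih]
    have hfg : (fun i => liftR n ρ' (liftR n ρ i)) = liftR n (fun i => ρ' (ρ i)) := by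
      funext i
      unfold liftR
      by_cases h : i < n
      · simp [h]
      · have h2 : ¬ ρ (i - n) + n < n := by omega
        simp [h, h2]
    rw [hfg]
  | happ t u iht ihu => intro ρ ρ'; simp [iht, ihu]
  | hproj i t ih => intro ρ ρ'; simp [ih]
  | htup ts ih =>
    intro ρ ρ'
    simp only [rename_tup, List.map_map]
    congr 1
    apply List.map_congr_left
    intro a ha
    exact ih a ha ρ ρ'

theorem subst_rename (t : STm) : ∀ (ρ : Nat → Nat) (σ : Nat → STm),
    (t.rename ρ).subst σ = t.subst (fun i => σ (ρ i)) := by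
  induction t using inductionOn with
  | hvar i => intro ρ σ; simp
  | hlam n t ih =>
    intro ρ σ
    simp only [rename_lam, subst_lam, ih]
    have hfg : (fun i => liftS n σ (liftR n ρ i)) = liftS n (fun i => σ (ρ i)) := by
      funext i
      unfold liftR liftS
      by_cases h : i < n
      · simp [h]
      · have h2 : ¬ ρ (i - n) + n < n := by omega
        simp [h, h2]
    rw [hfg]
  | happ t u iht ihu => intro ρ σ; simp [iht, ihu]
  | hproj i t ih => intro ρ σ; simp [ih]
  | htup ts ih =>
    intro ρ σ
    simp only [rename_tup, subst_tup, List.map_map]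
    congr 1
    apply List.map_congr_left
    intro a ha
    exact ih a ha ρ σ

theorem rename_subst (t : STm) : ∀ (σ : Nat → STm) (ρ : Nat → Nat),
    (t.subst σ).rename ρ = t.subst (fun i => (σ i).rename ρ) := by
  induction t using inductionOn with
  | hvar i => intro σ ρ; simp
  | hlam n t ih =>
    intro σ ρ
    simp only [subst_lam, rename_lam, ih]
    have hfg : (fun i => (liftS n σ i).rename (liftR n ρ))
        = liftS n (fun i => (σ i).rename ρ) := by
      funext i
      unfold liftS
      by_cases h : i < n
      · simp [h, liftR]
      · simp only [if_neg h]
        rw [rename_rename, rename_rename]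
        have hfg2 : (fun j => liftR n ρ (j + n)) = (fun j => ρ j + n) := by
          funext j
          unfold liftR
          have h2 : ¬ j + n < n := by omega
          simp [h2]
        rw [hfg2]
    rw [hfg]
  | happ t u iht ihu => intro σ ρ; simp [iht, ihu]
  | hproj i t ih => intro σ ρ; simp [ih]
  | htup ts ih =>
    intro σ ρ
    simp only [subst_tup, rename_tup, List.map_map]
    congr 1
    apply List.map_congr_left
    intro a ha
    exact ih a ha σ ρ

theorem subst_subst (t : STm) : ∀ σ τ : Nat → STm,
    (t.subst σ).subst τ = t.subst (fun i => (σ i).subst τ) := by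
  induction t using inductionOn with
  | hvar i => intro σ τ; simp
  | hlam n t ih =>
    intro σ τ
    simp only [subst_lam, ih]
    have hfg : (fun i => (liftS n σ i).subst (liftS n τ))
        = liftS n (fun i => (σ i).subst τ) := by
      funext i
      by_cases h : i < n
      · simp [liftS, h]
      · rw [show liftS n σ i = (σ (i - n)).rename (· + n) from by simp [liftS, h],
            show liftS n (fun i => (σ i).subst τ) i
              = ((σ (i - n)).subst τ).rename (· + n) from by simp [liftS, h]]
        rw [subst_rename, rename_subst]
        have hfg2 : (fun j => liftS n τ (j + n)) = (fun j => (τ j).rename (· + n)) := by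
          funext j
          have h2 : ¬ j + n < n := by omega
          simp [liftS, h2]
        rw [hfg2]
    rw [hfg]
  | happ t u iht ihu => intro σ τ; simp [iht, ihu]
  | hproj i t ih => intro σ τ; simp [ih]
  | htup ts ih =>
    intro σ τ
    simp only [subst_tup, List.map_map]
    congr 1
    apply List.map_congr_left
    intro a ha
    exact ih a ha σ τ

theorem subst_id (t : STm) : t.subst (fun i => var i) = t := by
  induction t using inductionOn with
  | hvar i => simp
  | hlam n t ih =>
    simp only [subst_lam]
    have : liftS n (fun i => var i) = (fun i => var i) := by
      funext i
      unfold liftS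
      by_cases h : i < n
      · simp [h]
      · simp only [if_neg h, rename_var]
        congr 1
        omega
    rw [this, ih]
  | happ t u iht ihu => simp [iht, ihu]
  | hproj i t ih => simp [ih]
  | htup ts ih =>
    simp only [subst_tup]
    congr 1
    conv_rhs => rw [← List.map_id ts]
    apply List.map_congr_left
    intro a ha
    simpa using ih a ha

end STm

theorem subst_congr {k : Nat} {t : STm} (h : SFB k t) :
    ∀ σ τ : Nat → STm, (∀ i < k, σ i = τ i) → t.subst σ = t.subst τ := by
  induction h with
  | var hik => intro σ τ hst; simpa using hst _ hik
  | @lam k n t _ ih =>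
    intro σ τ hst
    simp only [STm.subst_lam]
    congr 1
    apply ih
    intro i hi
    unfold liftS
    by_cases h2 : i < n
    · simp [h2]
    · simp only [if_neg h2]
      rw [hst (i - n) (by omega)]
  | app _ _ iht ihu => intro σ τ hst; simp [iht σ τ hst, ihu σ τ hst]
  | proj _ ih => intro σ τ hst; simp [ih σ τ hst]
  | tup _ ih =>
    intro σ τ hst
    simp only [STm.subst_tup]
    congr 1
    apply List.map_congr_left
    intro a ha
    exact ih a ha σ τ hst

theorem rename_SFB {k : Nat} {t : STm} (h : SFB k t) :
    ∀ (k' : Nat) (ρ : Nat → Nat), (∀ i < k, ρ i < k') → SFB k' (t.rename ρ) := by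
  induction h with
  | var hik => intro k' ρ hρ; simpa using SFB.var (hρ _ hik)
  | @lam k n t _ ih =>
    intro k' ρ hρ
    simp only [STm.rename_lam]
    exact SFB.lam (ih (k' + n) (liftR n ρ) (by
      intro i hi
      unfold liftR
      by_cases h2 : i < n
      · simp [h2]; omega
      · simp only [if_neg h2]
        have := hρ (i - n) (by omega)
        omega))
  | app _ _ iht ihu => intro k' ρ hρ; simp only [STm.rename_app]; exact SFB.app (iht k' ρ hρ) (ihu k' ρ hρ)
  | proj _ ih => intro k' ρ hρ; simp only [STm.rename_proj]; exact SFB.proj (ih k' ρ hρ)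
  | tup _ ih =>
    intro k' ρ hρ
    simp only [STm.rename_tup]
    refine SFB.tup ?_
    intro x hx
    obtain ⟨a, ha, rfl⟩ := List.mem_map.1 hx
    exact ih a ha k' ρ hρ

theorem subst_SFB {k : Nat} {t : STm} (h : SFB k t) :
    ∀ (k' : Nat) (σ : Nat → STm), (∀ i < k, SFB k' (σ i)) → SFB k' (t.subst σ) := by
  induction h with
  | var hik => intro k' σ hσ; simpa using hσ _ hik
  | @lam k n t _ ih =>
    intro k' σ hσ
    simp only [STm.subst_lam]
    refine SFB.lam (ih (k' + n) (liftS n σ) ?_)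
    intro i hi
    unfold liftS
    by_cases h2 : i < n
    · simp only [if_pos h2]
      exact SFB.var (by omega)
    · simp only [if_neg h2]
      exact rename_SFB (hσ (i - n) (by omega)) (k' + n) _ (by intro j hj; omega)
  | app _ _ iht ihu => intro k' σ hσ; simp only [STm.subst_app]; exact SFB.app (iht k' σ hσ) (ihu k' σ hσ)
  | proj _ ih => intro k' σ hσ; simp only [STm.subst_proj]; exact SFB.proj (ih k' σ hσ)
  | tup _ ih =>
    intro k' σ hσ
    simp only [STm.subst_tup]
    refine SFB.tup ?_
    intro x hx
    obtain ⟨a, ha, rfl⟩ := List.mem_map.1 hx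
    exact ih a ha k' σ hσ

/-! ### λ_int side -/

/-- The substitution performed by unwrapping a closure. -/
def cloSig (n m : Nat) (ub : List STm) : Nat → STm :=
  fun i => if i < m then .var i
    else if i < m + n then (ub.getD (i - m) default).rename (· + m)
    else .var (i - n)

namespace ITm

@[simp] theorem isubst_var (vs : List ITm) (i : Nat) :
    ITm.isubst vs (.var i) = if i < vs.length then vs.getD i default else .var (i - vs.length) := by
  rw [isubst]

@[simp] theorem isubst_app (vs : List ITm) (t u : ITm) :
    ITm.isubst vs (.app t u) = .app (t.isubst vs) (u.isubst vs) := by rw [isubst]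

@[simp] theorem isubst_proj (vs : List ITm) (i : Nat) (t : ITm) :
    ITm.isubst vs (.proj i t) = .proj i (t.isubst vs) := by rw [isubst]

@[simp] theorem isubst_tup (vs : List ITm) (ts : List ITm) :
    ITm.isubst vs (.tup ts) = .tup (ts.map (isubst vs)) := by rw [isubst]; simp

@[simp] theorem isubst_clo (vs : List ITm) (n m : Nat) (body : ITm) (bag : List ITm) :
    ITm.isubst vs (.clo n m body bag) = .clo n m body (bag.map (isubst vs)) := by
  rw [isubst]; simp

@[simp] theorem unwrap_var (i : Nat) : (ITm.var i).unwrap = .var i := by rw [unwrap]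

@[simp] theorem unwrap_app (t u : ITm) :
    (ITm.app t u).unwrap = .app t.unwrap u.unwrap := by rw [unwrap]

@[simp] theorem unwrap_proj (i : Nat) (t : ITm) :
    (ITm.proj i t).unwrap = .proj i t.unwrap := by rw [unwrap]

@[simp] theorem unwrap_tup (ts : List ITm) :
    (ITm.tup ts).unwrap = .tup (ts.map unwrap) := by rw [unwrap]; simp

theorem unwrap_clo (n m : Nat) (body : ITm) (bag : List ITm) :
    (ITm.clo n m body bag).unwrap
      = .lam m (body.unwrap.subst (cloSig n m (bag.map unwrap))) := by
  rw [unwrap]; simp only [List.attach_map_val]; rfl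

end ITm

theorem getD_unwrap (l : List ITm) (i : Nat) :
    (l.map ITm.unwrap).getD i default = (l.getD i default).unwrap := by
  have h : ITm.unwrap default = (default : STm) := by
    show ITm.unwrap (.var 0) = .var 0; simp
  rw [← h, List.getD_map]

theorem IVal_unwrap {v : ITm} (h : IVal v) : SVal v.unwrap := by
  induction h with
  | @cloV n m t bag _ => rw [ITm.unwrap_clo]; exact SVal.lam
  | @cloE n m t bag _ => rw [ITm.unwrap_clo]; exact SVal.lam
  | tup _ ih =>
    rw [ITm.unwrap_tup]
    refine SVal.tup ?_
    intro w hw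
    obtain ⟨a, ha, rfl⟩ := List.mem_map.1 hw
    exact ih a ha

theorem unwrap_SFB {k : Nat} {t : ITm} (hf : IFB k t) : IWF t → SFB k t.unwrap := by
  induction hf with
  | var h => intro _; simpa using SFB.var h
  | app _ _ iht ihu =>
    intro hw
    cases hw with
    | app h1 h2 => simpa using SFB.app (iht h1) (ihu h2)
  | proj _ ih =>
    intro hw
    cases hw with
    | proj h1 => simpa using SFB.proj (ih h1)
  | tup _ ih =>
    intro hw
    cases hw with
    | tup hall =>
      rw [ITm.unwrap_tup]
      refine SFB.tup ?_
      intro x hx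
      obtain ⟨a, ha, rfl⟩ := List.mem_map.1 hx
      exact ih a ha (hall a ha)
  | @clo k n m body bag hb hbody ihb ihbody =>
    intro hw
    -- extract closure facts
    have hfacts : bag.length = n ∧ IWF body ∧ (∀ b ∈ bag, IWF b) := by
      cases hw with
      | cloV hlen _ hvars hwb =>
        exact ⟨hlen, hwb, fun b hbmem => by
          obtain ⟨j, rfl⟩ := hvars b hbmem; exact IWF.var⟩
      | cloE hlen _ _ hwbag hwb => exact ⟨hlen, hwb, hwbag⟩
    obtain ⟨hlen, hwb, hwbag⟩ := hfacts
    rw [ITm.unwrap_clo]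
    refine SFB.lam ?_
    refine subst_SFB (ihbody hwb) (k + m) _ ?_
    intro i hi
    unfold cloSig
    by_cases h1 : i < m
    · simp only [if_pos h1]
      exact SFB.var (by omega)
    · by_cases h2 : i < m + n
      · simp only [if_neg h1, if_pos h2]
        have hlt : i - m < bag.length := by omega
        rw [getD_unwrap]
        refine rename_SFB (ihb _ (getD_mem' hlt) (hwbag _ (getD_mem' hlt))) (k + m) _ ?_
        intro j hj; omega
      · simp only [if_neg h1, if_neg h2]
        exact SFB.var (by omega)

theorem clo_case {n m : Nat} {body : ITm} {bag : List ITm}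
    (hlen : bag.length = n) (hfb : IFB (n + m) body) (hwb : IWF body)
    (hElem : ∀ b ∈ bag, ∀ ws : List ITm,
      (ITm.isubst ws b).unwrap = b.unwrap.subst (sigS (ws.map ITm.unwrap))) :
    ∀ ws : List ITm,
      (ITm.isubst ws (.clo n m body bag)).unwrap
        = (ITm.clo n m body bag).unwrap.subst (sigS (ws.map ITm.unwrap)) := by
  intro ws
  rw [ITm.isubst_clo, ITm.unwrap_clo, ITm.unwrap_clo, STm.subst_lam, STm.subst_subst]
  congr 1
  refine subst_congr (unwrap_SFB hfb hwb) _ _ ?_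
  intro i hi
  unfold cloSig
  by_cases h1 : i < m
  · simp only [if_pos h1, STm.subst_var]
    unfold liftS
    simp [h1]
  · have h2 : i < m + n := by omega
    simp only [if_neg h1, if_pos h2, STm.subst_rename]
    have hlt : i - m < bag.length := by omega
    have hfun : (fun j => liftS m (sigS (ws.map ITm.unwrap)) (j + m))
        = (fun j => (sigS (ws.map ITm.unwrap) j).rename (· + m)) := by
      funext j
      unfold liftS
      have hj : ¬ j + m < m := by omega
      simp [hj]
    rw [hfun, ← STm.rename_subst]
    rw [getD_unwrap, getD_unwrap]
    rw [List.getD_eq_getElem _ _ hlt, List.getD_eq_getElem _ _ (by simpa using hlt)]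
    rw [List.getElem_map]
    rw [hElem _ (List.getElem_mem hlt) ws]

theorem unwrap_isubst {t : ITm} (hw : IWF t) :
    ∀ ws : List ITm,
      (ITm.isubst ws t).unwrap = t.unwrap.subst (sigS (ws.map ITm.unwrap)) := by
  induction hw with
  | @var i =>
    intro ws
    simp only [ITm.isubst_var]
    by_cases h : i < ws.length
    · rw [if_pos h]
      simp only [ITm.unwrap_var, STm.subst_var, sigS, List.length_map, if_pos h]
      rw [getD_unwrap]
    · rw [if_neg h]
      simp only [ITm.unwrap_var, STm.subst_var, sigS, List.length_map, if_neg h]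
  | app _ _ iht ihu => intro ws; simp [iht ws, ihu ws]
  | proj _ ih => intro ws; simp [ih ws]
  | tup _ ih =>
    intro ws
    simp only [ITm.isubst_tup, ITm.unwrap_tup, STm.subst_tup, List.map_map]
    congr 1
    apply List.map_congr_left
    intro a ha
    exact ih a ha ws
  | @cloV n m body bag hlen hfb hvars hwb ihb =>
    intro ws
    refine clo_case hlen hfb hwb ?_ ws
    intro b hbmem ws'
    obtain ⟨j, rfl⟩ := hvars b hbmem
    simp only [ITm.isubst_var]
    by_cases h : j < ws'.length
    · rw [if_pos h]
      simp only [ITm.unwrap_var, STm.subst_var, sigS, List.length_map, if_pos h]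
      rw [getD_unwrap]
    · rw [if_neg h]
      simp only [ITm.unwrap_var, STm.subst_var, sigS, List.length_map, if_neg h]
  | @cloE n m body bag hlen hfb _ hwbag hwb ihbag ihb =>
    intro ws
    exact clo_case hlen hfb hwb (fun b hb ws' => ihbag b hb ws') ws

theorem proj_aux {l : Lab} {t u : ITm} (h : IStepL l t u) :
    IWF t → SStepL l t.unwrap u.unwrap := by
  induction h with
  | @beta n m body bag vs hbagv hvsv hblen hvslen =>
    intro hwf
    obtain ⟨h1, h2⟩ : IWF (ITm.clo n m body bag) ∧ IWF (ITm.tup vs) := by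
      cases hwf with | app a b => exact ⟨a, b⟩
    have hfacts : bag.length = n ∧ IFB (n + m) body ∧ IWF body := by
      cases h1 with
      | cloV a b c d => exact ⟨a, b, d⟩
      | cloE a b c d e => exact ⟨a, b, e⟩
    obtain ⟨hlen, hfb, hwb⟩ := hfacts
    rw [ITm.unwrap_app, ITm.unwrap_clo, ITm.unwrap_tup]
    have key : (ITm.isubst (vs ++ bag) body).unwrap
        = STm.substList (vs.map ITm.unwrap)
            (body.unwrap.subst (cloSig n m (bag.map ITm.unwrap))) := by
      rw [unwrap_isubst hwb, substList_eq, STm.subst_subst]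
      refine subst_congr (unwrap_SFB hfb hwb) _ _ ?_
      intro i hi
      unfold cloSig
      by_cases hi1 : i < m
      · simp only [if_pos hi1, STm.subst_var, sigS, List.length_map, List.length_append]
        rw [if_pos (by omega), if_pos (by omega)]
        rw [getD_unwrap, getD_unwrap, getD_append_left' _ _ _ (by omega)]
      · have hi2 : i < m + n := by omega
        simp only [if_neg hi1, if_pos hi2, STm.subst_rename]
        have hfun : (fun j => sigS (vs.map ITm.unwrap) (j + m)) = (fun j => STm.var j) := by
          funext j
          unfold sigS
          rw [if_neg (by simp only [List.length_map, hvslen]; omega)]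
          simp [hvslen]
        rw [hfun, STm.subst_id]
        simp only [sigS, List.length_map, List.length_append]
        rw [if_pos (by omega)]
        rw [getD_unwrap, getD_unwrap, getD_append_right' _ _ _ (by omega), hvslen]
    rw [key]
    refine SStepL.beta ?_ (by simp [hvslen])
    intro v hv
    obtain ⟨a, ha, rfl⟩ := List.mem_map.1 hv
    exact IVal_unwrap (hvsv a ha)
  | @proj i vs hv hlen =>
    intro hwf
    rw [ITm.unwrap_proj, ITm.unwrap_tup, ← getD_unwrap]
    refine SStepL.proj ?_ (by simpa using hlen)
    intro v hv'
    obtain ⟨a, ha, rfl⟩ := List.mem_map.1 hv'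
    exact IVal_unwrap (hv a ha)
  | @appR l t u u' _ ih =>
    intro hwf
    obtain ⟨h1, h2⟩ : IWF t ∧ IWF u := by cases hwf with | app a b => exact ⟨a, b⟩
    simp only [ITm.unwrap_app]
    exact SStepL.appR (ih h2)
  | @appL l v t t' hval _ ih =>
    intro hwf
    obtain ⟨h1, h2⟩ : IWF t ∧ IWF v := by cases hwf with | app a b => exact ⟨a, b⟩
    simp only [ITm.unwrap_app]
    exact SStepL.appL (IVal_unwrap hval) (ih h1)
  | @projC l i t t' _ ih =>
    intro hwf
    have h1 : IWF t := by cases hwf with | proj a => exact a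
    simp only [ITm.unwrap_proj]
    exact SStepL.projC (ih h1)
  | @tupC l ts t t' vs hvals _ ih =>
    intro hwf
    have hall : ∀ x ∈ ts ++ t :: vs, IWF x := by cases hwf with | tup a => exact a
    have h1 : IWF t := hall t (by simp)
    simp only [ITm.unwrap_tup, List.map_append, List.map_cons]
    refine SStepL.tupC ?_ (ih h1)
    intro v hv
    obtain ⟨a, ha, rfl⟩ := List.mem_map.1 hv
    exact IVal_unwrap (hvals a ha)

/-- Projection of reduction through unwrapping: for closed well-formed `t` in
λ_int, an `iβv`-step projects to a `βv`-step, and an `iπ`-step to a `π`-step,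
on the unwrappings. -/
theorem unwrap_projection (t u : ITm) (hc : IFB 0 t) (hwf : IWF t) :
    (IStepL .beta t u → SStepL .beta t.unwrap u.unwrap) ∧
    (IStepL .pi t u → SStepL .pi t.unwrap u.unwrap) := by
  exact ⟨fun h => proj_aux h hwf, fun h => proj_aux h hwf⟩

end CC
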